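/- (Equivalence of optimal chaining cost under strict and ChainX precedence) Let Q and T be strings and let 𝒜 be a finite set of exact match anchors between Q and T. Then the minimum cost of a chain under strict precedence ≺ over 𝒜 equals the minimum cost of a chain under strong (ChainX) precedence ≺_X over 𝒜. -/

import Mathlib

/-- An anchor: a pair of integer intervals `([qs..qe],[ts..te])`. -/
structure Anchor where
  qs : ℤ
  qe : ℤ
  ts : ℤ
  te : ℤ
deriving DecidableEq

/-- `a` is a well-formed anchor: nonempty intervals satisfying the
    exact-match invariant `qe - qs = te - ts`. -/
def Anchor.Valid (a : Anchor) : Prop :=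
  a.qs ≤ a.qe ∧ a.ts ≤ a.te ∧ a.qe - a.qs = a.te - a.ts

/-- Strict precedence `a ≺ a'`. -/
def strictPrec (a a' : Anchor) : Prop :=
  a.qs ≤ a'.qs ∧ a.qe ≤ a'.qe ∧ a.ts ≤ a'.ts ∧ a.te ≤ a'.te ∧
    (a.qs < a'.qs ∨ a.qe < a'.qe ∨ a.ts < a'.ts ∨ a.te < a'.te)

/-- Weak precedence `a ≺_w a'`. -/
def weakPrec (a a' : Anchor) : Prop :=
  a.qs ≤ a'.qs ∧ a.ts ≤ a'.ts ∧ (a.qs < a'.qs ∨ a.ts < a'.ts)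

/-- Strong (ChainX) precedence `a ≺_X a'`. -/
def chainxPrec (a a' : Anchor) : Prop :=
  a.qs < a'.qs ∧ a.qe < a'.qe ∧ a.ts < a'.ts ∧ a.te < a'.te

/-- Gap cost `gap(a,a') = max(0, qs' - qe - 1, ts' - te - 1)`. -/
def gapCost (a a' : Anchor) : ℤ :=
  max 0 (max (a'.qs - a.qe - 1) (a'.ts - a.te - 1))

/-- Overlap cost `o(a,a') = |max(0, qe - qs' + 1) - max(0, te - ts' + 1)|`. -/
def ovCost (a a' : Anchor) : ℤ :=
  |max 0 (a.qe - a'.qs + 1) - max 0 (a.te - a'.ts + 1)|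

/-- `connect(a,a') = gap(a,a') + o(a,a')`. -/
def connectCost (a a' : Anchor) : ℤ := gapCost a a' + ovCost a a'

/-- The diagonal of an anchor: `diag(a) = qs - ts`. -/
def Anchor.diag (a : Anchor) : ℤ := a.qs - a.ts


/-- `a` is an exact match anchor between (1-indexed) strings `Q` and `T`:
    the intervals are within bounds, nonempty, have equal length, and the
    corresponding characters match. -/
def IsEMA {α : Type*} (Q T : List α) (a : Anchor) : Prop :=
  1 ≤ a.qs ∧ a.qs ≤ a.qe ∧ a.qe ≤ Q.length ∧
  1 ≤ a.ts ∧ a.ts ≤ a.te ∧ a.te ≤ T.length ∧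
  a.qe - a.qs = a.te - a.ts ∧
  ∀ k : ℤ, 0 ≤ k → k ≤ a.qe - a.qs →
    Q[(a.qs + k - 1).toNat]? = T[(a.ts + k - 1).toNat]?

/-- The start sentinel anchor `([0..0],[0..0])`. -/
def startAnchor : Anchor := ⟨0, 0, 0, 0⟩

/-- The end sentinel anchor `([|Q|+1..|Q|+1],[|T|+1..|T|+1])`. -/
def endAnchor (m n : ℕ) : Anchor := ⟨(m : ℤ) + 1, (m : ℤ) + 1, (n : ℤ) + 1, (n : ℤ) + 1⟩

/-- Sum of connect costs over consecutive elements of a list of anchors. -/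
def pathCost : List Anchor → ℤ
  | [] => 0
  | [_] => 0
  | x :: y :: rest => connectCost x y + pathCost (y :: rest)

/-- Cost of a chain `A = a_1, ..., a_c`:
    `Σ_{i=0}^{c} connect(a_i, a_{i+1})` with the sentinel anchors
    `a_0` and `a_{c+1}` added at the ends. -/
def chainCost {α : Type*} (Q T : List α) (A : List Anchor) : ℤ :=
  pathCost (startAnchor :: A ++ [endAnchor Q.length T.length])

/-- The set of costs of chains over `𝒜` under the precedence relation `prec`. -/
def chainCosts {α : Type*} (Q T : List α) (𝒜 : Finset Anchor)
    (prec : Anchor → Anchor → Prop) : Set ℤ :=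
  {c | ∃ A : List Anchor, (∀ a ∈ A, a ∈ 𝒜) ∧ A.Chain' prec ∧ c = chainCost Q T A}

/-!
Writing `x = q_s' - q_e - 1` and `y = t_s' - t_e - 1`, the cost `connect(a, a')` equals
`max(0, x, y) + |min(0, x) - min(0, y)|`, a function of `(x, y)` that is symmetric and grows at
most by `s` when one argument grows by `s`. If `a ≺ b` but not `a ≺_X b`, the two anchors share a
start coordinate or an end coordinate. Sharing, say, `q_s`, the exact-match invariant of `a` makes
`connect(a, b) = t_s(b) - t_s(a)`, which pays for moving the target of any incoming connection from
`a` to `b`; so `a` can be dropped from the chain at no extra cost. Sharing an end coordinate is the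
mirror image (reverse both strings), and then `b` can be dropped. Repeating this turns every strict
chain into a ChainX chain that is no more expensive, while every ChainX chain is a strict chain.
-/

def displacementCost (x y : ℤ) : ℤ := max 0 (max x y) + |min 0 x - min 0 y|

lemma displacementCost_comm (x y : ℤ) : displacementCost x y = displacementCost y x := by
  rw [displacementCost, displacementCost, max_comm x, abs_sub_comm]

lemma displacementCost_add_right_le (x y : ℤ) {s : ℤ} (hs : 0 ≤ s) :
    displacementCost x (y + s) ≤ displacementCost x y + s := by
  simp only [displacementCost, abs_eq_max_neg]
  omega

lemma displacementCost_of_nonpos_of_le {x y : ℤ} (hx : x ≤ 0) (hxy : x ≤ y) :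
    displacementCost x y = y - x := by
  simp only [displacementCost, abs_eq_max_neg]
  omega

lemma connectCost_eq_displacementCost (a b : Anchor) :
    connectCost a b = displacementCost (b.qs - a.qe - 1) (b.ts - a.te - 1) := by
  simp only [connectCost, gapCost, ovCost, displacementCost, abs_eq_max_neg]
  omega

namespace Anchor

def swap (a : Anchor) : Anchor := ⟨a.ts, a.te, a.qs, a.qe⟩

/-- The anchor seen in the reversed strings, up to a common shift of the coordinates. -/
def reverse (a : Anchor) : Anchor := ⟨-a.qe, -a.qs, -a.te, -a.ts⟩

lemma Valid.swap {a : Anchor} (ha : a.Valid) : a.swap.Valid := by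
  obtain ⟨h₁, h₂, h₃⟩ := ha
  exact ⟨h₂, h₁, h₃.symm⟩

lemma Valid.reverse {a : Anchor} (ha : a.Valid) : a.reverse.Valid := by
  obtain ⟨h₁, h₂, h₃⟩ := ha
  refine ⟨neg_le_neg h₁, neg_le_neg h₂, ?_⟩
  simp only [Anchor.reverse]
  omega

end Anchor

lemma connectCost_swap (a b : Anchor) : connectCost a.swap b.swap = connectCost a b := by
  rw [connectCost_eq_displacementCost, connectCost_eq_displacementCost, displacementCost_comm]
  rfl

lemma connectCost_reverse (a b : Anchor) : connectCost b.reverse a.reverse = connectCost a b := by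
  rw [connectCost_eq_displacementCost, connectCost_eq_displacementCost]
  simp only [Anchor.reverse]
  ring_nf

lemma connectCost_le_of_qs_eq (p : Anchor) {a b : Anchor} (ha : a.Valid) (hq : a.qs = b.qs)
    (ht : a.ts ≤ b.ts) : connectCost p b ≤ connectCost p a + connectCost a b := by
  obtain ⟨_, _, _⟩ := ha
  have hab : connectCost a b = b.ts - a.ts := by
    rw [connectCost_eq_displacementCost, displacementCost_of_nonpos_of_le] <;> omega
  calc connectCost p b
      = displacementCost (a.qs - p.qe - 1) ((a.ts - p.te - 1) + (b.ts - a.ts)) := by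
        rw [connectCost_eq_displacementCost, hq]; ring_nf
    _ ≤ connectCost p a + connectCost a b := by
        rw [hab, connectCost_eq_displacementCost]
        exact displacementCost_add_right_le _ _ (by omega)

lemma connectCost_le_of_start_eq (p : Anchor) {a b : Anchor} (ha : a.Valid) (hq : a.qs ≤ b.qs)
    (ht : a.ts ≤ b.ts) (h : a.qs = b.qs ∨ a.ts = b.ts) :
    connectCost p b ≤ connectCost p a + connectCost a b := by
  rcases h with h | h
  · exact connectCost_le_of_qs_eq p ha h ht
  · simpa only [connectCost_swap] using connectCost_le_of_qs_eq p.swap ha.swap (b := b.swap) h hq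

lemma connectCost_le_of_end_eq (n : Anchor) {a b : Anchor} (hb : b.Valid) (hq : a.qe ≤ b.qe)
    (ht : a.te ≤ b.te) (h : a.qe = b.qe ∨ a.te = b.te) :
    connectCost a n ≤ connectCost a b + connectCost b n := by
  have reversed := connectCost_le_of_start_eq n.reverse hb.reverse (a := b.reverse)
    (b := a.reverse) (neg_le_neg hq) (neg_le_neg ht) (by simp only [Anchor.reverse, neg_inj]; tauto)
  simp only [connectCost_reverse] at reversed
  linarith

lemma IsEMA.valid {α : Type*} {Q T : List α} {a : Anchor} (h : IsEMA Q T a) : a.Valid :=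
  ⟨h.2.1, h.2.2.2.2.1, h.2.2.2.2.2.2.1⟩

lemma strictPrec_trans {a b c : Anchor} (hab : strictPrec a b) (hbc : strictPrec b c) :
    strictPrec a c := by
  simp only [strictPrec] at *
  omega

instance : Trans strictPrec strictPrec strictPrec := ⟨strictPrec_trans⟩

lemma strictPrec_of_chainxPrec {a b : Anchor} (h : chainxPrec a b) : strictPrec a b := by
  simp only [strictPrec, chainxPrec] at *
  omega

lemma start_eq_or_end_eq_of_strictPrec_of_not_chainxPrec {a b : Anchor} (h : strictPrec a b)
    (hx : ¬ chainxPrec a b) : (a.qs = b.qs ∨ a.ts = b.ts) ∨ (a.qe = b.qe ∨ a.te = b.te) := by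
  simp only [strictPrec, chainxPrec] at *
  omega

lemma connectCost_nonneg (a b : Anchor) : 0 ≤ connectCost a b :=
  add_nonneg (le_max_left _ _) (abs_nonneg _)

lemma pathCost_nonneg : ∀ l : List Anchor, 0 ≤ pathCost l
  | [] | [_] => le_rfl
  | a :: b :: l => add_nonneg (connectCost_nonneg a b) (pathCost_nonneg (b :: l))

lemma pathCost_append_cons (l r : List Anchor) (m : Anchor) :
    pathCost (l ++ m :: r) = pathCost (l ++ [m]) + pathCost (m :: r) := by
  induction l with
  | nil => simp [pathCost]
  | cons a l ih =>
    cases l with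
    | nil => simp [pathCost]
    | cons b l => simp only [List.cons_append, pathCost] at ih ⊢; rw [ih, add_assoc]

lemma pathCost_erase_le {p m n : Anchor}
    (h : connectCost p n ≤ connectCost p m + connectCost m n) (l r : List Anchor) :
    pathCost (l ++ p :: n :: r) ≤ pathCost (l ++ p :: m :: n :: r) := by
  rw [pathCost_append_cons l (n :: r) p, pathCost_append_cons l (m :: n :: r) p]
  simp only [pathCost]
  linarith

section Chains

variable {α : Type*} (Q T : List α)

lemma chainCost_erase_left_le {a b : Anchor}
    (h : ∀ p, connectCost p b ≤ connectCost p a + connectCost a b) (l r : List Anchor) :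
    chainCost Q T (l ++ b :: r) ≤ chainCost Q T (l ++ a :: b :: r) := by
  obtain ⟨l', p, hl⟩ : ∃ l' p, startAnchor :: l = l' ++ [p] :=
    ⟨_, _, (List.dropLast_append_getLast (List.cons_ne_nil _ _)).symm⟩
  have key := pathCost_erase_le (h p) l' (r ++ [endAnchor Q.length T.length])
  have hsplit : ∀ s, startAnchor :: (l ++ s) ++ [endAnchor Q.length T.length] =
      l' ++ p :: (s ++ [endAnchor Q.length T.length]) := fun s => by
    rw [← List.cons_append, hl]; simp
  simpa only [chainCost, hsplit, List.cons_append] using key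

lemma chainCost_erase_right_le {a b : Anchor}
    (h : ∀ n, connectCost a n ≤ connectCost a b + connectCost b n) (l r : List Anchor) :
    chainCost Q T (l ++ a :: r) ≤ chainCost Q T (l ++ a :: b :: r) := by
  obtain ⟨n, r', hr⟩ : ∃ n r', r ++ [endAnchor Q.length T.length] = n :: r' := by
    cases r <;> simp
  have key := pathCost_erase_le (h n) (startAnchor :: l) r'
  simpa only [chainCost, List.cons_append, List.append_assoc, hr] using key

lemma exists_shorter_sublist_chainCost_le {A : List Anchor}
    (hv : ∀ a ∈ A, a.Valid) (hs : A.IsChain strictPrec) (hx : ¬ A.IsChain chainxPrec) :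
    ∃ A', A'.Sublist A ∧ A'.length < A.length ∧ chainCost Q T A' ≤ chainCost Q T A := by
  rw [List.isChain_iff_forall_rel_of_append_cons_cons] at hx
  push Not at hx
  obtain ⟨a, b, l, r, rfl, hab⟩ := hx
  have hprec := List.isChain_iff_forall_rel_of_append_cons_cons.mp hs rfl
  rcases start_eq_or_end_eq_of_strictPrec_of_not_chainxPrec hprec hab with hstart | hend
  · refine ⟨l ++ b :: r, (List.sublist_cons_self a _).append_left l, by simp,
      chainCost_erase_left_le Q T (fun p => ?_) l r⟩
    exact connectCost_le_of_start_eq p (hv a (by simp)) hprec.1 hprec.2.2.1 hstart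
  · refine ⟨l ++ a :: r, ((List.sublist_cons_self b r).cons_cons a).append_left l, by simp,
      chainCost_erase_right_le Q T (fun n => ?_) l r⟩
    exact connectCost_le_of_end_eq n (hv b (by simp)) hprec.2.1 hprec.2.2.2.1 hend

lemma exists_chainx_sublist_chainCost_le {A : List Anchor}
    (hv : ∀ a ∈ A, a.Valid) (hs : A.IsChain strictPrec) :
    ∃ A', A'.Sublist A ∧ A'.IsChain chainxPrec ∧ chainCost Q T A' ≤ chainCost Q T A := by
  induction hlen : A.length using Nat.strong_induction_on generalizing A with
  | _ k ih =>
    by_cases hx : A.IsChain chainxPrec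
    · exact ⟨A, List.Sublist.refl A, hx, le_rfl⟩
    obtain ⟨A₁, hsub₁, hlt, hle₁⟩ := exists_shorter_sublist_chainCost_le Q T hv hs hx
    obtain ⟨A₂, hsub₂, hx₂, hle₂⟩ :=
      ih _ (hlen ▸ hlt) (fun a ha => hv a (hsub₁.subset ha)) (hs.sublist hsub₁) rfl
    exact ⟨A₂, hsub₂.trans hsub₁, hx₂, hle₂.trans hle₁⟩

variable (𝒜 : Finset Anchor)

lemma chainCosts_mono {prec prec' : Anchor → Anchor → Prop}
    (h : ∀ a b, prec a b → prec' a b) :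
    chainCosts Q T 𝒜 prec ⊆ chainCosts Q T 𝒜 prec' := by
  rintro c ⟨A, hA, hchain, rfl⟩
  exact ⟨A, hA, List.IsChain.imp h hchain, rfl⟩

lemma chainCosts_nonempty (prec : Anchor → Anchor → Prop) :
    (chainCosts Q T 𝒜 prec).Nonempty :=
  ⟨_, [], by simp, List.isChain_nil, rfl⟩

lemma chainCosts_bddBelow (prec : Anchor → Anchor → Prop) :
    BddBelow (chainCosts Q T 𝒜 prec) := by
  refine ⟨0, ?_⟩
  rintro c ⟨A, -, -, rfl⟩
  exact pathCost_nonneg _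

end Chains

/-- For a finite set of exact match anchors between `Q` and `T`, the optimal
    chaining cost under strict precedence equals the optimal chaining cost
    under strong (ChainX) precedence. -/
theorem optimal_cost_strict_eq_chainx {α : Type*} (Q T : List α)
    (𝒜 : Finset Anchor) (hA : ∀ a ∈ 𝒜, IsEMA Q T a) :
    sInf (chainCosts Q T 𝒜 strictPrec) = sInf (chainCosts Q T 𝒜 chainxPrec) := by
  refine le_antisymm (csInf_le_csInf (chainCosts_bddBelow ..) (chainCosts_nonempty ..)
    (chainCosts_mono Q T 𝒜 fun _ _ => strictPrec_of_chainxPrec)) ?_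
  refine le_csInf (chainCosts_nonempty ..) ?_
  rintro c ⟨A, hA𝒜, hs, rfl⟩
  obtain ⟨A', hsub, hx, hle⟩ :=
    exists_chainx_sublist_chainCost_le Q T (fun a ha => (hA a (hA𝒜 a ha)).valid) hs
  have hA'𝒜 : ∀ a ∈ A', a ∈ 𝒜 := fun a ha => hA𝒜 a (hsub.subset ha)
  exact (csInf_le (chainCosts_bddBelow ..) ⟨A', hA'𝒜, hx, rfl⟩).trans hle
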